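/- Let k ≥ 1 and K̂ = [-1,1]². Suppose q̂₁ is a polynomial on K̂ such that q̂₁·ν̂₁ has vanishing moments of degree ≤ k-1 against on the two vertical edges ξ = ±1 (i.e., ∫_{-1}^1 q̂₁(±1,η) p(η) dη = 0 for all p ∈ P_{k-1}), and q̂₁ ∈ P_k(ξ,η) \ span{η^k} ⊕ span{ξ^{k+1}, ξ²η^{k-1}}. Then q̂₁ can be written as q̂₁ = (1-ξ²)(ĝ₁ + c₁ J_{k-1}(ξ) + b₁ L_{k-1}(η)) with ĝ₁ ∈ P_{k-2}(K̂) and constants c₁, b₁. -/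

import Mathlib

open intervalIntegral MvPolynomial

/-- The Jacobi-type polynomials of the paper. -/
noncomputable def Jac (l : ℕ) (ξ : ℝ) : ℝ :=
  ((l + 1).factorial : ℝ) ^ 2 *
    ∑ s ∈ Finset.range (l + 1),
      (1 / ((s.factorial * (l + 1 - s).factorial * (s + 1).factorial * (l - s).factorial : ℕ) : ℝ)) *
        ((ξ - 1) / 2) ^ (l - s) * ((ξ + 1) / 2) ^ s

/-- The Legendre polynomials via the Rodrigues formula. -/
noncomputable def Leg (l : ℕ) (ξ : ℝ) : ℝ :=
  (1 / ((2 : ℝ) ^ l * (l.factorial : ℝ))) * iteratedDeriv l (fun x : ℝ => (x ^ 2 - 1) ^ l) ξ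

/-- Evaluation of a bivariate polynomial (variable `0` is `x`/`ξ`, variable `1` is `y`/`η`). -/
noncomputable def ev2 (p : MvPolynomial (Fin 2) ℝ) (x y : ℝ) : ℝ :=
  MvPolynomial.eval ![x, y] p

/-- Membership in `P_k \ span{y^k}`: total degree at most `k` and the coefficient of `y^k`
vanishes. -/
def memPkNoYk (k : ℕ) (p : MvPolynomial (Fin 2) ℝ) : Prop :=
  p.totalDegree ≤ k ∧ MvPolynomial.coeff (Finsupp.single 1 k) p = 0

/-- Membership in `P_k \ span{x^k}`. -/
def memPkNoXk (k : ℕ) (p : MvPolynomial (Fin 2) ℝ) : Prop :=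
  p.totalDegree ≤ k ∧ MvPolynomial.coeff (Finsupp.single 0 k) p = 0

/-- First component of the enriched BDFM space:
`P_k \ span{y^k} ⊕ span{x^{k+1}, x² y^{k-1}}`. -/
def memH1 (k : ℕ) (q : MvPolynomial (Fin 2) ℝ) : Prop :=
  ∃ p : MvPolynomial (Fin 2) ℝ, ∃ a b : ℝ, memPkNoYk k p ∧
    q = p + MvPolynomial.C a * X 0 ^ (k + 1) + MvPolynomial.C b * X 0 ^ 2 * X 1 ^ (k - 1)

/-- Second component of the enriched BDFM space:
`P_k \ span{x^k} ⊕ span{y^{k+1}, y² x^{k-1}}`. -/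
def memH2 (k : ℕ) (q : MvPolynomial (Fin 2) ℝ) : Prop :=
  ∃ p : MvPolynomial (Fin 2) ℝ, ∃ a b : ℝ, memPkNoXk k p ∧
    q = p + MvPolynomial.C a * X 1 ^ (k + 1) + MvPolynomial.C b * X 1 ^ 2 * X 0 ^ (k - 1)

/-!
On a vertical edge `ξ = s` the trace `η ↦ q̂₁(s, η)` is a polynomial of degree `< k`: the only
monomial of `P_k` reaching `η^k` is excluded, and `ξ^{k+1}`, `ξ²η^{k-1}` have lower
`η`-degree. Being orthogonal to `P_{k-1}`, the trace is orthogonal to itself, hence zero.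
So `q̂₁` vanishes on `ξ = ±1` and `q̂₁ = (1 - ξ²) r`. Comparing top-degree parts,
`r ≡ -a ξ^{k-1} - b η^{k-1}` modulo `P_{k-2}`, and since `J_{k-1}` and `L_{k-1}` have exact
degree `k - 1`, these two monomials are multiples of `J_{k-1}(ξ)` and `L_{k-1}(η)` modulo
`P_{k-2}`.
-/

namespace Polynomial

section

variable {R : Type*} [CommSemiring R]

theorem natDegree_pow_mul_pow_le {A B : R[X]} (hA : A.natDegree ≤ 1) (hB : B.natDegree ≤ 1)
    (m n : ℕ) : (A ^ m * B ^ n).natDegree ≤ m + n := by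
  simpa using natDegree_mul_le_of_le (natDegree_pow_le_of_le m hA) (natDegree_pow_le_of_le n hB)

theorem coeff_pow_mul_pow {A B : R[X]} (hA : A.natDegree ≤ 1) (hB : B.natDegree ≤ 1)
    (m n : ℕ) : (A ^ m * B ^ n).coeff (m + n) = A.coeff 1 ^ m * B.coeff 1 ^ n := by
  have hAm := natDegree_pow_le_of_le m hA
  have hBn := natDegree_pow_le_of_le n hB
  rw [mul_one] at hAm hBn
  rw [coeff_mul_add_eq_of_natDegree_le hAm hBn, ← coeff_pow_of_natDegree_le hA,
    ← coeff_pow_of_natDegree_le hB, mul_one, mul_one]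

end

theorem degree_C_mul_X_pow_add_C_mul_lt {K : Type*} [Field K] {P : K[X]} {l : ℕ}
    (hP : P.degree = l) (a : K) :
    (C a * X ^ l + C (-a / P.leadingCoeff) * P).degree < (l : WithBot ℕ) := by
  have hP0 : P ≠ 0 := by rintro rfl; simp at hP
  have hnat : P.natDegree = l := natDegree_eq_of_degree_eq_some hP
  rw [degree_lt_iff_coeff_zero]
  intro m hm
  rcases hm.eq_or_lt with rfl | hlt
  · rw [coeff_add, coeff_C_mul_X_pow, if_pos rfl, coeff_C_mul, ← hnat, coeff_natDegree,
      div_mul_cancel₀ _ (leadingCoeff_ne_zero.mpr hP0), add_neg_cancel]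
  · rw [coeff_add, coeff_C_mul_X_pow, if_neg hlt.ne', coeff_C_mul,
      coeff_eq_zero_of_natDegree_lt (hnat ▸ hlt), mul_zero, add_zero]

theorem iteratedDeriv_eval (P : ℝ[X]) (n : ℕ) :
    iteratedDeriv n (fun x => P.eval x) = fun x => (derivative^[n] P).eval x := by
  induction n with
  | zero => simp
  | succ n ih =>
    rw [iteratedDeriv_succ, ih, Function.iterate_succ_apply']
    funext x
    exact Polynomial.deriv _

theorem eq_zero_of_integral_mul_pow_eq_zero {P : ℝ[X]} {a b : ℝ} {k : ℕ} (hab : a < b)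
    (hdeg : P.degree < k) (horth : ∀ j < k, ∫ t in a..b, P.eval t * t ^ j = 0) : P = 0 := by
  by_contra hP
  have hsq : ∫ t in a..b, P.eval t ^ 2 = 0 := by
    have hexp (t : ℝ) : P.eval t ^ 2 = ∑ j ∈ Finset.range k, P.coeff j * (P.eval t * t ^ j) := by
      rw [sq]
      nth_rw 2 [eval_eq_sum_range' ((natDegree_lt_iff_degree_lt hP).mpr hdeg)]
      rw [Finset.mul_sum]
      exact Finset.sum_congr rfl fun j _ => by ring
    simp_rw [hexp]
    rw [intervalIntegral.integral_finsetSum fun j _ =>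
      (by fun_prop : Continuous _).intervalIntegrable _ _]
    exact Finset.sum_eq_zero fun j hj => by
      rw [intervalIntegral.integral_const_mul, horth j (Finset.mem_range.mp hj), mul_zero]
  refine (intervalIntegral.integral_pos hab (P.continuous.pow 2).continuousOn
    (fun t _ => sq_nonneg _) ?_).ne' hsq
  by_contra! hzero
  refine hP (P.eq_zero_of_infinite_isRoot ((Set.Icc_infinite hab).mono fun t ht => ?_))
  exact pow_eq_zero_iff two_ne_zero |>.mp ((hzero t ht).antisymm (sq_nonneg _))

noncomputable def jac (l : ℕ) : ℝ[X] :=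
  C (((l + 1).factorial : ℝ) ^ 2) *
    ∑ s ∈ Finset.range (l + 1),
      C ((s.factorial * (l + 1 - s).factorial * (s + 1).factorial * (l - s).factorial : ℝ)⁻¹) *
        (((X - 1) * C 2⁻¹) ^ (l - s) * ((X + 1) * C 2⁻¹) ^ s)

theorem eval_jac (l : ℕ) (ξ : ℝ) : (jac l).eval ξ = Jac l ξ := by
  simp [jac, Jac, div_eq_mul_inv, eval_finsetSum, mul_assoc]

theorem degree_jac (l : ℕ) : (jac l).degree = l := by
  have hA : ((X - 1) * C 2⁻¹ : ℝ[X]).natDegree ≤ 1 := by compute_degree!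
  have hB : ((X + 1) * C 2⁻¹ : ℝ[X]).natDegree ≤ 1 := by compute_degree!
  have hterm (s : ℕ) (hs : s ≤ l) :
      (((X - 1) * C 2⁻¹) ^ (l - s) * ((X + 1) * C 2⁻¹) ^ s : ℝ[X]).natDegree ≤ l ∧
      (((X - 1) * C 2⁻¹) ^ (l - s) * ((X + 1) * C 2⁻¹) ^ s : ℝ[X]).coeff l = 2⁻¹ ^ l := by
    have hl : l = l - s + s := (Nat.sub_add_cancel hs).symm
    refine ⟨(natDegree_pow_mul_pow_le hA hB _ _).trans_eq hl.symm, ?_⟩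
    have h := coeff_pow_mul_pow hA hB (l - s) s
    rw [← hl] at h
    rw [h]
    simp only [coeff_mul_C, coeff_sub, coeff_add, coeff_X_one, coeff_one, one_ne_zero, if_false,
      sub_zero, add_zero, one_mul, ← pow_add, ← hl]
  refine degree_eq_of_le_of_coeff_ne_zero (degree_le_of_natDegree_le ?_) (ne_of_gt ?_)
  · refine (natDegree_C_mul_le _ _).trans (natDegree_sum_le_of_forall_le _ _ fun s hs => ?_)
    exact (natDegree_C_mul_le _ _).trans (hterm s (Finset.mem_range_succ_iff.mp hs)).1
  · rw [jac, coeff_C_mul, finsetSum_coeff]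
    refine mul_pos (by positivity) (Finset.sum_pos (fun s hs => ?_) Finset.nonempty_range_add_one)
    rw [coeff_C_mul, (hterm s (Finset.mem_range_succ_iff.mp hs)).2]
    positivity

noncomputable def leg (l : ℕ) : ℝ[X] :=
  C (1 / ((2 : ℝ) ^ l * (l.factorial : ℝ))) * derivative^[l] ((X ^ 2 - 1) ^ l)

theorem eval_leg (l : ℕ) (η : ℝ) : (leg l).eval η = Leg l η := by
  have : (fun x : ℝ => (x ^ 2 - 1) ^ l) = fun x => (((X ^ 2 - 1) ^ l : ℝ[X])).eval x := by
    simp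
  simp [leg, Leg, this, iteratedDeriv_eval]

theorem degree_leg (l : ℕ) : (leg l).degree = l := by
  have hmonic : ((X ^ 2 - 1) ^ l : ℝ[X]).Monic := (monic_X_pow_sub_C (1 : ℝ) two_ne_zero).pow l
  have hdeg : ((X ^ 2 - 1) ^ l : ℝ[X]).natDegree = l + l := by
    rw [natDegree_pow, show (X ^ 2 - 1 : ℝ[X]).natDegree = 2 by compute_degree!]
    ring
  refine degree_eq_of_le_of_coeff_ne_zero (degree_le_of_natDegree_le ?_) ?_
  · refine (natDegree_C_mul_le _ _).trans ((natDegree_iterate_derivative _ _).trans ?_)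
    omega
  · rw [leg, coeff_C_mul, coeff_iterate_derivative, ← hdeg, hmonic.coeff_natDegree, nsmul_one]
    refine mul_ne_zero (by positivity) (Nat.cast_ne_zero.mpr ?_)
    rw [Ne, Nat.descFactorial_eq_zero_iff_lt]
    omega

end Polynomial

namespace MvPolynomial

section

variable {R σ : Type*} [CommSemiring R]

theorem totalDegree_X_pow_le (i : σ) (n : ℕ) : (X i ^ n : MvPolynomial σ R).totalDegree ≤ n := by
  simpa [X_pow_eq_monomial] using totalDegree_monomial_le (Finsupp.single i n) (1 : R)

theorem totalDegree_toMvPolynomial_le (P : Polynomial R) (i : σ) :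
    (P.toMvPolynomial i).totalDegree ≤ P.natDegree := by
  rw [Polynomial.toMvPolynomial, Polynomial.aeval_eq_sum_range]
  refine totalDegree_finsetSum_le fun n hn => ?_
  exact (totalDegree_smul_le _ _).trans
    ((totalDegree_X_pow_le i n).trans (Finset.mem_range_succ_iff.mp hn))

theorem totalDegree_X_pow_mul_toMvPolynomial_le {P : Polynomial R} {l : ℕ}
    (hP : P.degree < l) (i j : σ) (n : ℕ) :
    (X i ^ n * P.toMvPolynomial j).totalDegree ≤ n + l - 1 := by
  rcases eq_or_ne P 0 with rfl | hP0
  · simp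
  have hnat : P.natDegree < l := (Polynomial.natDegree_lt_iff_degree_lt hP0).mpr hP
  have hXn := totalDegree_X_pow_le (R := R) i n
  have hPj := totalDegree_toMvPolynomial_le P j
  have := totalDegree_mul (X i ^ n) (P.toMvPolynomial j)
  omega

end

section

variable {R : Type*} [CommRing R] [IsDomain R] [Infinite R] {n : ℕ}
  {q : MvPolynomial (Fin (n + 1)) R}

theorem X_zero_sub_C_dvd {s : R} (h : ∀ v : Fin n → R, eval (Fin.cons s v) q = 0) :
    X 0 - C s ∣ q := by
  have hroot : (finSuccEquiv R n q).IsRoot (C s) := by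
    refine MvPolynomial.funext fun v => ?_
    rw [map_zero, ← h v, eval_eq_eval_mv_eval', Polynomial.eval_map, ← eval_C (σ := Fin n) s,
      Polynomial.eval₂_at_apply, eval_C]
  obtain ⟨r, hr⟩ := Polynomial.dvd_iff_isRoot.mpr hroot
  refine ⟨(finSuccEquiv R n).symm r, (finSuccEquiv R n).injective ?_⟩
  rw [map_mul, AlgEquiv.apply_symm_apply, map_sub, finSuccEquiv_X_zero, ← algebraMap_eq,
    AlgEquiv.commutes, Polynomial.algebraMap_apply, algebraMap_eq, hr]

theorem X_zero_sub_C_mul_X_zero_sub_C_dvd {s t : R} (hst : s ≠ t)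
    (hs : ∀ v : Fin n → R, eval (Fin.cons s v) q = 0)
    (ht : ∀ v : Fin n → R, eval (Fin.cons t v) q = 0) : (X 0 - C s) * (X 0 - C t) ∣ q := by
  obtain ⟨r, rfl⟩ := X_zero_sub_C_dvd hs
  refine mul_dvd_mul_left _ (X_zero_sub_C_dvd fun v => ?_)
  have := ht v
  rw [eval_mul, eval_sub, eval_X, eval_C, Fin.cons_zero] at this
  exact (mul_eq_zero.mp this).resolve_left (sub_ne_zero.mpr hst.symm)

end

section

variable {R σ : Type*} [CommRing R]

theorem totalDegree_one_sub_X_sq [Nontrivial R] (i : σ) :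
    (1 - X i ^ 2 : MvPolynomial σ R).totalDegree = 2 := by
  rw [sub_eq_add_neg, totalDegree_add_eq_right_of_totalDegree_lt] <;> simp

theorem eq_zero_or_totalDegree_add_two_le [IsDomain R] {g : MvPolynomial σ R} {i : σ} {d : ℕ}
    (h : ((1 - X i ^ 2) * g).totalDegree ≤ d) : g = 0 ∨ g.totalDegree + 2 ≤ d := by
  refine or_iff_not_imp_left.mpr fun hg => ?_
  have h0 : (1 - X i ^ 2 : MvPolynomial σ R) ≠ 0 := fun h0 => by
    simpa [h0] using totalDegree_one_sub_X_sq (R := R) i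
  rw [totalDegree_mul_of_isDomain h0 hg, totalDegree_one_sub_X_sq] at h
  omega

end

end MvPolynomial

theorem one_sub_X_sq_dvd {q : MvPolynomial (Fin 2) ℝ} (h1 : ∀ t, ev2 q 1 t = 0)
    (hm1 : ∀ t, ev2 q (-1) t = 0) : 1 - X 0 ^ 2 ∣ q := by
  have hcons (s : ℝ) (v : Fin 1 → ℝ) : (Fin.cons s v : Fin 2 → ℝ) = ![s, v 0] := by
    ext i; fin_cases i <;> rfl
  have := X_zero_sub_C_mul_X_zero_sub_C_dvd (q := q) (by norm_num : (1 : ℝ) ≠ -1)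
    (fun v => hcons 1 v ▸ h1 (v 0)) (fun v => hcons (-1) v ▸ hm1 (v 0))
  refine dvd_trans ⟨-1, ?_⟩ this
  rw [map_neg, map_one]
  ring

noncomputable def sliceAt (s : ℝ) : MvPolynomial (Fin 2) ℝ →ₐ[ℝ] Polynomial ℝ :=
  aeval ![Polynomial.C s, Polynomial.X]

theorem eval_sliceAt (s t : ℝ) (q : MvPolynomial (Fin 2) ℝ) :
    (sliceAt s q).eval t = ev2 q s t := by
  rw [sliceAt, ← Polynomial.coe_aeval_eq_eval, comp_aeval_apply]
  change _ = aeval ![s, t] q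
  congr 2
  funext i
  fin_cases i <;> simp

theorem degree_sliceAt_lt (s : ℝ) {q : MvPolynomial (Fin 2) ℝ} {k : ℕ}
    (h : ∀ m ∈ q.support, m 1 < k) : (sliceAt s q).degree < k := by
  rw [q.as_sum, map_sum]
  refine (Polynomial.degree_sum_le _ _).trans_lt
    ((Finset.sup_lt_iff (WithBot.bot_lt_coe k)).mpr fun m hm => ?_)
  rw [sliceAt, aeval_monomial, Finsupp.prod_fintype _ _ fun _ => pow_zero _, Fin.prod_univ_two]
  simp only [Matrix.cons_val_zero, Matrix.cons_val_one, Polynomial.algebraMap_apply,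
    Algebra.algebraMap_self, RingHom.id_apply, ← Polynomial.C_pow, ← mul_assoc,
    ← Polynomial.C_mul]
  exact (Polynomial.degree_C_mul_X_pow_le _ _).trans_lt (WithBot.coe_lt_coe.mpr (h m hm))

theorem degree_sliceAt_lt_of_memH1 (s : ℝ) {k : ℕ} (hk : 1 ≤ k) {q : MvPolynomial (Fin 2) ℝ}
    (hq : memH1 k q) : (sliceAt s q).degree < k := by
  obtain ⟨p, a, b, ⟨hp, hpy⟩, rfl⟩ := hq
  refine degree_sliceAt_lt s fun m hm => ?_
  simp only [X_pow_eq_monomial, C_mul_monomial, monomial_mul, mul_one] at hm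
  rcases Finset.mem_union.mp (support_add hm) with hm | hm
  · rcases Finset.mem_union.mp (support_add hm) with hm | hm
    · have hdeg : m 0 + m 1 ≤ k := by
        simpa [Finsupp.sum_fintype, Fin.sum_univ_two] using (le_totalDegree hm).trans hp
      by_contra! hmk
      have : m = Finsupp.single 1 k := by
        ext i; fin_cases i <;> simp <;> omega
      exact mem_support_iff.mp hm (this ▸ hpy)
    · rw [Finset.mem_singleton.mp (support_monomial_subset hm)]
      simpa using Nat.one_pos.trans_le hk
  · rw [Finset.mem_singleton.mp (support_monomial_subset hm)]
    simpa using Nat.one_pos.trans_le hk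

theorem ev2_eq_zero_of_memH1_of_moments {k : ℕ} (hk : 1 ≤ k) {q : MvPolynomial (Fin 2) ℝ}
    (hq : memH1 k q) {s : ℝ} (hmom : ∀ j < k, ∫ η in (-1 : ℝ)..1, ev2 q s η * η ^ j = 0)
    (t : ℝ) : ev2 q s t = 0 := by
  have hslice : sliceAt s q = 0 :=
    Polynomial.eq_zero_of_integral_mul_pow_eq_zero (by norm_num : (-1 : ℝ) < 1)
      (degree_sliceAt_lt_of_memH1 s hk hq) (by simpa only [eval_sliceAt] using hmom)
  rw [← eval_sliceAt, hslice, Polynomial.eval_zero]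

open Polynomial (jac leg) in
theorem exists_eq_add_smul_jac_add_smul_leg {l : ℕ} {p r : MvPolynomial (Fin 2) ℝ} {a b : ℝ}
    (hp : p.totalDegree ≤ l + 1)
    (hr : (1 - X 0 ^ 2) * r = p + C a * X 0 ^ (l + 1 + 1) + C b * X 0 ^ 2 * X 1 ^ l) :
    ∃ (g : MvPolynomial (Fin 2) ℝ) (c b' : ℝ), (g = 0 ∨ g.totalDegree + 2 ≤ l + 1) ∧
      r = g + c • (jac l).toMvPolynomial 0 + b' • (leg l).toMvPolynomial 1 := by
  set J := (jac l).toMvPolynomial (0 : Fin 2)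
  set L := (leg l).toMvPolynomial (1 : Fin 2)
  set c := -a / (jac l).leadingCoeff
  set b' := -b / (leg l).leadingCoeff
  refine ⟨r - c • J - b' • L, c, b', eq_zero_or_totalDegree_add_two_le (i := 0) ?_, by abel⟩
  -- `c` and `b'` are chosen so that both brackets below have degree `< l`.
  have hexpand : (1 - X 0 ^ 2) * (r - c • J - b' • L) = p - (c • J + b' • L) +
      X 0 ^ 2 * (.C a * .X ^ l + .C c * jac l : Polynomial ℝ).toMvPolynomial (0 : Fin 2) +
      X 0 ^ 2 * (.C b * .X ^ l + .C b' * leg l : Polynomial ℝ).toMvPolynomial (1 : Fin 2) := by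
    simp only [J, L, map_add, map_mul, map_pow, Polynomial.toMvPolynomial_C,
      Polynomial.toMvPolynomial_X, smul_eq_C_mul]
    linear_combination hr
  have hJ := Polynomial.natDegree_eq_of_degree_eq_some (Polynomial.degree_jac l)
  have hL := Polynomial.natDegree_eq_of_degree_eq_some (Polynomial.degree_leg l)
  have hA := Polynomial.degree_C_mul_X_pow_add_C_mul_lt (Polynomial.degree_jac l) a
  have hB := Polynomial.degree_C_mul_X_pow_add_C_mul_lt (Polynomial.degree_leg l) b
  rw [← mem_restrictTotalDegree, hexpand]
  refine add_mem (add_mem (sub_mem ?_ (add_mem (Submodule.smul_mem _ _ ?_)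
    (Submodule.smul_mem _ _ ?_))) ?_) ?_ <;> rw [mem_restrictTotalDegree]
  · exact hp
  · exact (totalDegree_toMvPolynomial_le _ _).trans (by omega)
  · exact (totalDegree_toMvPolynomial_le _ _).trans (by omega)
  · exact (totalDegree_X_pow_mul_toMvPolynomial_le hA 0 0 2).trans (by omega)
  · exact (totalDegree_X_pow_mul_toMvPolynomial_le hB 0 (1 : Fin 2) 2).trans (by omega)

theorem bdfm_first_component_factorization (k : ℕ) (hk : 1 ≤ k)
    (q1 : MvPolynomial (Fin 2) ℝ) (hq1 : memH1 k q1)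
    (hedgeV : ∀ s : ℝ, s = 1 ∨ s = -1 → ∀ j < k,
      (∫ η in (-1 : ℝ)..1, ev2 q1 s η * η ^ j) = 0) :
    ∃ (g : MvPolynomial (Fin 2) ℝ) (c b : ℝ),
      (g = 0 ∨ g.totalDegree + 2 ≤ k) ∧
      ∀ ξ η : ℝ, ev2 q1 ξ η =
        (1 - ξ ^ 2) * (ev2 g ξ η + c * Jac (k - 1) ξ + b * Leg (k - 1) η) := by
  have hedge (s : ℝ) (hs : s = 1 ∨ s = -1) (t : ℝ) : ev2 q1 s t = 0 :=
    ev2_eq_zero_of_memH1_of_moments hk hq1 (hedgeV s hs) t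
  obtain ⟨r, hr⟩ := one_sub_X_sq_dvd (hedge 1 (.inl rfl)) (hedge (-1) (.inr rfl))
  obtain ⟨p, a, b, ⟨hp, -⟩, hq⟩ := hq1
  obtain ⟨l, rfl⟩ := Nat.exists_eq_add_of_le' hk
  rw [Nat.add_sub_cancel] at hq ⊢
  obtain ⟨g, c, b', hg, rfl⟩ := exists_eq_add_smul_jac_add_smul_leg hp (hr.symm.trans hq)
  refine ⟨g, c, b', hg, fun ξ η => ?_⟩
  simp only [ev2, hr, map_mul, map_add, map_sub, map_one, map_pow, eval_X, smul_eval,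
    eval_toMvPolynomial, Polynomial.eval_jac, Polynomial.eval_leg, Matrix.cons_val_zero,
    Matrix.cons_val_one]
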